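/- Let n ≥ 6 and let Γ' be a signed graph of order n that attains the maximum largest eigenvalue λ1 among all unbalanced, negative-C4-free signed graphs of order n. Then the underlying graph of Γ' contains a cycle of length 4 as a subgraph. -/

import Mathlib

/-!
The signed graph `Γ₁` (a negative triangle sharing one vertex with an all-positive `K_{n-2}`) is
unbalanced and negative-`C₄`-free with `λ₁(Γ₁) ≥ n - 3`, so maximality gives `λ₁(Γ') ≥ n - 3`.
Since `|A(Γ')|` is the adjacency matrix of the underlying graph `G'`, the index `μ` of `G'` is at
least `λ₁(Γ')`. If `G'` had no `4`-cycle, two distinct vertices would have at most one common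
neighbour; evaluating `A(G')²` on a nonnegative Perron vector at a largest coordinate then gives
`μ² ≤ μ + n - 1`, which is incompatible with `μ ≥ n - 3` once `n ≥ 6`.
-/

open scoped BigOperators

/-- A signed graph on the vertex set `Fin n`: a simple graph together with a
symmetric `±1` sign on each edge. -/
structure SignedGraph (n : ℕ) where
  G : SimpleGraph (Fin n)
  sign : Fin n → Fin n → ℤ
  sign_symm : ∀ i j, sign i j = sign j i
  sign_pm : ∀ i j, G.Adj i j → sign i j = 1 ∨ sign i j = -1

namespace SignedGraph

variable {n : ℕ}

open Classical in
/-- The adjacency matrix of a signed graph, as a real matrix. -/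
noncomputable def adjMatrix (Γ : SignedGraph n) : Matrix (Fin n) (Fin n) ℝ :=
  fun i j => if Γ.G.Adj i j then (Γ.sign i j : ℝ) else 0

/-- The largest eigenvalue (the index) of a signed graph. -/
noncomputable def lambda1 (Γ : SignedGraph n) : ℝ :=
  sSup (spectrum ℝ Γ.adjMatrix)

/-- The sign of an unordered edge. -/
def signEdge (Γ : SignedGraph n) : Sym2 (Fin n) → ℤ :=
  Sym2.lift ⟨Γ.sign, Γ.sign_symm⟩

/-- The sign of a walk: the product of the signs of its edges. -/
def walkSign (Γ : SignedGraph n) {u v : Fin n} (w : Γ.G.Walk u v) : ℤ :=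
  (w.edges.map Γ.signEdge).prod

/-- A negative cycle: a cycle whose sign is `-1`
(equivalently, with an odd number of negative edges). -/
def IsNegCycle (Γ : SignedGraph n) {u : Fin n} (c : Γ.G.Walk u u) : Prop :=
  c.IsCycle ∧ Γ.walkSign c = -1

/-- A signed graph is unbalanced if it contains a negative cycle. -/
def Unbalanced (Γ : SignedGraph n) : Prop :=
  ∃ (u : Fin n) (c : Γ.G.Walk u u), Γ.IsNegCycle c

/-- A signed graph is negative-`C₄`-free if it contains no negative 4-cycle. -/
def NegC4Free (Γ : SignedGraph n) : Prop :=
  ∀ (u : Fin n) (c : Γ.G.Walk u u), c.IsCycle → c.length = 4 → Γ.walkSign c ≠ -1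

end SignedGraph

/-- The signed graph `Γ₁`: vertices `2,…,n-1` induce an all-positive complete
graph, vertices `0` and `1` are joined to each other by a negative edge and to
vertex `2` by positive edges, and have no other neighbours. -/
def Gamma1 (n : ℕ) : SignedGraph n where
  G :=
    { Adj := fun i j => i ≠ j ∧ (2 ≤ min i.val j.val ∨ max i.val j.val ≤ 2)
      symm := by
        constructor
        intro i j h
        refine ⟨Ne.symm h.1, ?_⟩
        rw [min_comm, max_comm]
        exact h.2
      loopless := by constructor; intro i h; exact h.1 rfl }
  sign := fun i j =>
    if (i.val = 0 ∧ j.val = 1) ∨ (i.val = 1 ∧ j.val = 0) then -1 else 1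
  sign_symm := by
    intro i j
    try dsimp only
    by_cases h : (i.val = 0 ∧ j.val = 1) ∨ (i.val = 1 ∧ j.val = 0)
    · rw [if_pos h, if_pos (by tauto)]
    · rw [if_neg h, if_neg (by tauto)]
  sign_pm := by
    intro i j _
    try dsimp only
    by_cases h : (i.val = 0 ∧ j.val = 1) ∨ (i.val = 1 ∧ j.val = 0)
    · rw [if_pos h]; right; rfl
    · rw [if_neg h]; left; rfl

/-- The signed graph `Γ₂`: vertices `4,…,n-1` induce an all-positive complete
graph, vertices `2` and `3` are joined by positive edges to all of `4,…,n-1`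
(but not to each other), vertices `0` and `1` are joined to each other by a
negative edge and to `2` and `3` by positive edges, and have no other
neighbours. -/
def Gamma2 (n : ℕ) : SignedGraph n where
  G :=
    { Adj := fun i j => i ≠ j ∧
        ((i.val ≤ 1 ∧ j.val ≤ 3) ∨ (j.val ≤ 1 ∧ i.val ≤ 3) ∨
         (2 ≤ i.val ∧ i.val ≤ 3 ∧ 4 ≤ j.val) ∨ (2 ≤ j.val ∧ j.val ≤ 3 ∧ 4 ≤ i.val) ∨
         (4 ≤ i.val ∧ 4 ≤ j.val))
      symm := by
        constructor
        intro i j h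
        exact ⟨Ne.symm h.1, by tauto⟩
      loopless := by constructor; intro i h; exact h.1 rfl }
  sign := fun i j =>
    if (i.val = 0 ∧ j.val = 1) ∨ (i.val = 1 ∧ j.val = 0) then -1 else 1
  sign_symm := by
    intro i j
    try dsimp only
    by_cases h : (i.val = 0 ∧ j.val = 1) ∨ (i.val = 1 ∧ j.val = 0)
    · rw [if_pos h, if_pos (by tauto)]
    · rw [if_neg h, if_neg (by tauto)]
  sign_pm := by
    intro i j _
    try dsimp only
    by_cases h : (i.val = 0 ∧ j.val = 1) ∨ (i.val = 1 ∧ j.val = 0)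
    · rw [if_pos h]; right; rfl
    · rw [if_neg h]; left; rfl


/-- The all-negative complete signed graph `(K_n, -)`. -/
def NegKn (n : ℕ) : SignedGraph n where
  G := ⊤
  sign := fun _ _ => -1
  sign_symm := fun _ _ => rfl
  sign_pm := fun _ _ _ => Or.inr rfl

/-- `Γ` is switching equivalent to `Γ'` (up to a relabelling of the vertices):
there is a bijection of the vertices matching the underlying graphs and a
`±1`-valued switching function `s` relating the two sign functions. -/
def SwitchingEquiv {n : ℕ} (Γ Γ' : SignedGraph n) : Prop :=
  ∃ e : Fin n ≃ Fin n, ∃ s : Fin n → ℤ, (∀ i, s i = 1 ∨ s i = -1) ∧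
    (∀ i j, Γ.G.Adj i j ↔ Γ'.G.Adj (e i) (e j)) ∧
    (∀ i j, Γ.G.Adj i j → Γ.sign i j = s i * Γ'.sign (e i) (e j) * s j)

open Matrix Finset

section Spectrum

variable {ι : Type*} [Fintype ι]

lemma Matrix.dotProduct_mulVec_le_abs {A B : Matrix ι ι ℝ} (h : ∀ i j, |A i j| ≤ B i j)
    (x : ι → ℝ) : x ⬝ᵥ A *ᵥ x ≤ |x| ⬝ᵥ B *ᵥ |x| := by
  simp only [dotProduct, mulVec, Finset.mul_sum, Pi.abs_apply]
  refine Finset.sum_le_sum fun i _ => Finset.sum_le_sum fun j _ => ?_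
  calc x i * (A i j * x j) ≤ |x i * (A i j * x j)| := le_abs_self _
    _ = |x i| * (|A i j| * |x j|) := by rw [abs_mul, abs_mul]
    _ ≤ |x i| * (B i j * |x j|) := by gcongr; exact h i j

variable [DecidableEq ι] {M : Matrix ι ι ℝ}

namespace Matrix.IsHermitian

lemma posSemidef_sSup_spectrum_smul_one_sub (hM : M.IsHermitian) :
    (sSup (spectrum ℝ M) • (1 : Matrix ι ι ℝ) - M).PosSemidef := by
  refine posSemidef_iff_isHermitian_and_spectrum_nonneg.mpr
    ⟨(isHermitian_one.smul (IsSelfAdjoint.all _)).sub hM, ?_⟩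
  rw [← Algebra.algebraMap_eq_smul_one, ← spectrum.singleton_sub_eq]
  rintro _ ⟨_, rfl, μ, hμ, rfl⟩
  exact sub_nonneg.mpr (le_csSup (finite_real_spectrum (A := M)).bddAbove hμ)

lemma dotProduct_mulVec_le (hM : M.IsHermitian) (x : ι → ℝ) :
    x ⬝ᵥ M *ᵥ x ≤ sSup (spectrum ℝ M) * (x ⬝ᵥ x) := by
  have := hM.posSemidef_sSup_spectrum_smul_one_sub.dotProduct_mulVec_nonneg x
  simp only [star_trivial, sub_mulVec, dotProduct_sub, smul_mulVec, one_mulVec,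
    dotProduct_smul, smul_eq_mul] at this
  linarith

lemma mulVec_eq_of_dotProduct_mulVec_eq (hM : M.IsHermitian) {x : ι → ℝ}
    (hx : x ⬝ᵥ M *ᵥ x = sSup (spectrum ℝ M) * (x ⬝ᵥ x)) :
    M *ᵥ x = sSup (spectrum ℝ M) • x := by
  have := (hM.posSemidef_sSup_spectrum_smul_one_sub.dotProduct_mulVec_zero_iff x).mp <| by
    simp only [star_trivial, sub_mulVec, dotProduct_sub, smul_mulVec, one_mulVec,
      dotProduct_smul, smul_eq_mul, hx, sub_self]
  rw [sub_mulVec, smul_mulVec, one_mulVec, sub_eq_zero] at this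
  exact this.symm

lemma exists_mulVec_eq_sSup_spectrum_smul [Nonempty ι] (hM : M.IsHermitian) :
    ∃ v ≠ 0, M *ᵥ v = sSup (spectrum ℝ M) • v := by
  have hne : (spectrum ℝ M).Nonempty := by
    rw [hM.spectrum_real_eq_range_eigenvalues]; exact Set.range_nonempty _
  have hmem := hne.csSup_mem (finite_real_spectrum (A := M))
  rw [spectrum.mem_iff, isUnit_iff_isUnit_det, isUnit_iff_ne_zero, not_not,
    ← exists_mulVec_eq_zero_iff] at hmem
  obtain ⟨v, hv, hMv⟩ := hmem
  refine ⟨v, hv, ?_⟩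
  rw [Algebra.algebraMap_eq_smul_one, sub_mulVec, smul_mulVec, one_mulVec, sub_eq_zero] at hMv
  exact hMv.symm

lemma sSup_spectrum_le_of_abs_le [Nonempty ι] {B : Matrix ι ι ℝ} (hA : M.IsHermitian)
    (hB : B.IsHermitian) (h : ∀ i j, |M i j| ≤ B i j) :
    sSup (spectrum ℝ M) ≤ sSup (spectrum ℝ B) := by
  obtain ⟨v, hv, hAv⟩ := hA.exists_mulVec_eq_sSup_spectrum_smul
  have hvv : 0 < v ⬝ᵥ v := by
    simpa [star_trivial] using dotProduct_star_self_pos_iff.mpr hv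
  have : sSup (spectrum ℝ M) * (v ⬝ᵥ v) ≤ sSup (spectrum ℝ B) * (v ⬝ᵥ v) :=
    calc sSup (spectrum ℝ M) * (v ⬝ᵥ v) = v ⬝ᵥ M *ᵥ v := by
          rw [hAv, dotProduct_smul, smul_eq_mul]
      _ ≤ |v| ⬝ᵥ B *ᵥ |v| := dotProduct_mulVec_le_abs h v
      _ ≤ sSup (spectrum ℝ B) * (|v| ⬝ᵥ |v|) := hB.dotProduct_mulVec_le _
      _ = sSup (spectrum ℝ B) * (v ⬝ᵥ v) := by simp [dotProduct, abs_mul_abs_self]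
  exact le_of_mul_le_mul_right this hvv

lemma exists_nonneg_mulVec_eq_sSup_spectrum_smul [Nonempty ι] (hM : M.IsHermitian)
    (hM0 : ∀ i j, 0 ≤ M i j) :
    ∃ F : ι → ℝ, 0 ≤ F ∧ F ≠ 0 ∧ M *ᵥ F = sSup (spectrum ℝ M) • F := by
  obtain ⟨v, hv, hMv⟩ := hM.exists_mulVec_eq_sSup_spectrum_smul
  refine ⟨|v|, abs_nonneg v, by simpa using hv, hM.mulVec_eq_of_dotProduct_mulVec_eq ?_⟩
  -- `|v|` has Rayleigh quotient at least that of `v`, hence the maximal one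
  refine le_antisymm (hM.dotProduct_mulVec_le _) ?_
  calc sSup (spectrum ℝ M) * (|v| ⬝ᵥ |v|) = v ⬝ᵥ M *ᵥ v := by
        rw [hMv, dotProduct_smul, smul_eq_mul]; simp [dotProduct, abs_mul_abs_self]
    _ ≤ |v| ⬝ᵥ M *ᵥ |v| :=
        dotProduct_mulVec_le_abs (fun i j => (abs_of_nonneg (hM0 i j)).le) v

end Matrix.IsHermitian

end Spectrum

namespace SimpleGraph

variable {V : Type*} {G : SimpleGraph V}

lemma Walk.exists_eq_cons_of_length_eq_four {u : V} (c : G.Walk u u) (h : c.length = 4) :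
    ∃ (a b d : V) (hua : G.Adj u a) (hab : G.Adj a b) (hbd : G.Adj b d) (hdu : G.Adj d u),
      c = .cons hua (.cons hab (.cons hbd (.cons hdu .nil))) := by
  match c, h with
  | .cons hua (.cons hab (.cons hbd (.cons hdu .nil))), _ =>
    exact ⟨_, _, _, hua, hab, hbd, hdu, rfl⟩

lemma commonNeighbors_subsingleton_of_not_exists_isCycle_length_eq_four
    (hG : ¬ ∃ (u : V) (c : G.Walk u u), c.IsCycle ∧ c.length = 4) {u v : V} (huv : u ≠ v) :
    (G.commonNeighbors u v).Subsingleton := by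
  intro a ha b hb
  obtain ⟨hua, hva⟩ := (mem_commonNeighbors G).mp ha
  obtain ⟨hub, hvb⟩ := (mem_commonNeighbors G).mp hb
  by_contra hab
  refine hG ⟨u, .cons hua (.cons hva.symm (.cons hvb (.cons hub.symm .nil))), ?_, rfl⟩
  have := hua.ne; have := hva.ne; have := hub.ne; have := hvb.ne
  simp [Walk.cons_isCycle_iff, *, Ne.symm]

variable [Fintype V] [DecidableRel G.Adj]

lemma adjMatrix_mul_self_apply_le_one
    (hG : ∀ u v, u ≠ v → (G.commonNeighbors u v).Subsingleton) {u v : V} (huv : u ≠ v) :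
    (G.adjMatrix ℝ * G.adjMatrix ℝ) u v ≤ 1 := by
  rw [adjMatrix_mul_apply]
  simp only [adjMatrix_apply]
  rw [Finset.sum_boole, Nat.cast_le_one, Finset.card_le_one]
  intro a ha b hb
  simp only [Finset.mem_filter, mem_neighborFinset] at ha hb
  exact hG u v huv ⟨ha.1, ha.2.symm⟩ ⟨hb.1, hb.2.symm⟩

variable [DecidableEq V]

lemma adjMatrix_mul_self_mulVec_apply_le
    (hG : ∀ u v, u ≠ v → (G.commonNeighbors u v).Subsingleton) {F : V → ℝ} (hF : 0 ≤ F)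
    {u : V} (hu : ∀ j, F j ≤ F u) :
    ((G.adjMatrix ℝ * G.adjMatrix ℝ) *ᵥ F) u
      ≤ (G.adjMatrix ℝ *ᵥ F) u + (Fintype.card V - 1) * F u := by
  set A := G.adjMatrix ℝ with hA
  -- neighbours `j` of `u` are charged to `(A *ᵥ F) u`, every other `j ≠ u` to `F u`
  let c : V → ℝ := fun j => 1 - A u j + if j = u then (G.degree u : ℝ) - 1 else 0
  have hdeg : ∑ j, A u j = G.degree u := by
    rw [← mul_one (G.degree u : ℝ), ← adjMatrix_mulVec_const_apply]
    simp only [mulVec, dotProduct, Function.const_apply, mul_one, hA]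
  have hc : ∑ j, c j = Fintype.card V - 1 := by
    simp only [c, Finset.sum_add_distrib, Finset.sum_sub_distrib, hdeg, Finset.sum_ite_eq',
      Finset.mem_univ, if_true, Finset.sum_const, Finset.card_univ, nsmul_eq_mul, mul_one]
    ring
  have hterm : ∀ j, (A * A) u j * F j ≤ A u j * F j + c j * F u := by
    intro j
    by_cases hj : j = u
    · subst hj
      rw [hA, adjMatrix_mul_self_apply_self]
      simp [c, hA]
    · have hAA : (A * A) u j * F j ≤ F j :=
        mul_le_of_le_one_left (hF j) (adjMatrix_mul_self_apply_le_one hG (Ne.symm hj))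
      by_cases hadj : G.Adj u j
      · simpa [c, hA, hj, hadj] using hAA
      · simpa [c, hA, hj, hadj] using hAA.trans (hu j)
  calc ((A * A) *ᵥ F) u = ∑ j, (A * A) u j * F j := rfl
    _ ≤ ∑ j, (A u j * F j + c j * F u) := Finset.sum_le_sum fun j _ => hterm j
    _ = (A *ᵥ F) u + (Fintype.card V - 1) * F u := by
      rw [Finset.sum_add_distrib, ← Finset.sum_mul, hc]; rfl

lemma sq_sSup_spectrum_adjMatrix_le [Nonempty V]
    (hG : ∀ u v, u ≠ v → (G.commonNeighbors u v).Subsingleton) :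
    sSup (spectrum ℝ (G.adjMatrix ℝ)) ^ 2
      ≤ sSup (spectrum ℝ (G.adjMatrix ℝ)) + (Fintype.card V - 1) := by
  set μ := sSup (spectrum ℝ (G.adjMatrix ℝ))
  have hA0 : ∀ i j, 0 ≤ G.adjMatrix ℝ i j := fun i j => by
    by_cases h : G.Adj i j <;> simp [h]
  obtain ⟨F, hF0, hF, hAF⟩ :=
    (isHermitian_adjMatrix ℝ G).exists_nonneg_mulVec_eq_sSup_spectrum_smul hA0
  obtain ⟨u, hu⟩ := Finite.exists_max F
  have hFu : 0 < F u := by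
    obtain ⟨i, hi⟩ := Function.ne_iff.mp hF
    exact ((hF0 i).lt_of_ne (Ne.symm hi)).trans_le (hu i)
  have hsq : ((G.adjMatrix ℝ * G.adjMatrix ℝ) *ᵥ F) u = μ ^ 2 * F u := by
    rw [← mulVec_mulVec, hAF, mulVec_smul, hAF]
    simp [μ, sq, mul_assoc]
  have := adjMatrix_mul_self_mulVec_apply_le hG hF0 hu
  rw [hsq, hAF, Pi.smul_apply, smul_eq_mul, ← add_mul] at this
  exact le_of_mul_le_mul_right this hFu

end SimpleGraph

namespace SignedGraph

variable {n : ℕ}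

lemma isHermitian_adjMatrix (Γ : SignedGraph n) : Γ.adjMatrix.IsHermitian := by
  refine isHermitian_iff_isSymm.mpr (IsSymm.ext fun i j => ?_)
  by_cases h : Γ.G.Adj i j
  · simp [adjMatrix, h, h.symm, Γ.sign_symm]
  · have h' : ¬Γ.G.Adj j i := fun h' => h h'.symm
    simp [adjMatrix, h, h']

lemma abs_adjMatrix_apply (Γ : SignedGraph n) [DecidableRel Γ.G.Adj] (i j : Fin n) :
    |Γ.adjMatrix i j| = Γ.G.adjMatrix ℝ i j := by
  by_cases h : Γ.G.Adj i j
  · rcases Γ.sign_pm i j h with hs | hs <;> simp [adjMatrix, h, hs]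
  · simp [adjMatrix, h]

lemma lambda1_le_sSup_spectrum_adjMatrix (Γ : SignedGraph n) [DecidableRel Γ.G.Adj]
    [NeZero n] : Γ.lambda1 ≤ sSup (spectrum ℝ (Γ.G.adjMatrix ℝ)) :=
  Γ.isHermitian_adjMatrix.sSup_spectrum_le_of_abs_le (SimpleGraph.isHermitian_adjMatrix ℝ _)
    fun i j => (Γ.abs_adjMatrix_apply i j).le

def IsPosClique (Γ : SignedGraph n) (S : Set (Fin n)) : Prop :=
  S.Pairwise fun i j => Γ.G.Adj i j ∧ Γ.sign i j = 1

lemma IsPosClique.card_sub_one_le_lambda1 {Γ : SignedGraph n} {S : Finset (Fin n)}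
    (hS : Γ.IsPosClique S) (hS0 : S.Nonempty) : (#S : ℝ) - 1 ≤ Γ.lambda1 := by
  set x : Fin n → ℝ := fun i => if i ∈ S then 1 else 0
  have hxx : x ⬝ᵥ x = #S := by simp [x, dotProduct]
  have hrow : ∀ i ∈ S, (Γ.adjMatrix *ᵥ x) i = #S - 1 := by
    intro i hi
    have hone : ∀ j ∈ S.erase i, Γ.adjMatrix i j = 1 := fun j hj => by
      obtain ⟨hij, hsign⟩ := hS hi (mem_erase.mp hj).2 (mem_erase.mp hj).1.symm
      simp [adjMatrix, hij, hsign]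
    simp only [mulVec, dotProduct, x, mul_ite, mul_one, mul_zero, sum_ite_mem, univ_inter]
    rw [← add_sum_erase S _ hi, sum_congr rfl hone, sum_const, card_erase_of_mem hi,
      nsmul_one, Nat.cast_pred hS0.card_pos]
    simp [adjMatrix]
  have hxAx : x ⬝ᵥ Γ.adjMatrix *ᵥ x = #S * (#S - 1) := by
    simp only [dotProduct, x, ite_mul, one_mul, zero_mul, sum_ite_mem, univ_inter]
    rw [sum_congr rfl hrow, sum_const, nsmul_eq_mul]
  have hpos : (0 : ℝ) < #S := by exact_mod_cast hS0.card_pos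
  have := Γ.isHermitian_adjMatrix.dotProduct_mulVec_le x
  rw [hxAx, hxx] at this
  exact le_of_mul_le_mul_left (by simpa [lambda1, mul_comm] using this) hpos

end SignedGraph

namespace Gamma1

variable {n : ℕ}

lemma val_le_two_of_adj {i j : Fin n} (h : (Gamma1 n).G.Adj i j) (hi : i.val ≤ 1) :
    j.val ≤ 2 := by
  rcases h.2 with h | h <;> omega

lemma sign_eq_one {i j : Fin n} (h : 2 ≤ i.val ∨ 2 ≤ j.val) : (Gamma1 n).sign i j = 1 :=
  if_neg (by omega)

theorem unbalanced (hn : 3 ≤ n) : (Gamma1 n).Unbalanced := by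
  let v0 : Fin n := ⟨0, by omega⟩
  let v1 : Fin n := ⟨1, by omega⟩
  let v2 : Fin n := ⟨2, by omega⟩
  have h01 : (Gamma1 n).G.Adj v0 v1 := ⟨by simp [v0, v1, Fin.ext_iff], Or.inr (by simp [v0, v1])⟩
  have h12 : (Gamma1 n).G.Adj v1 v2 := ⟨by simp [v1, v2, Fin.ext_iff], Or.inr (by simp [v1, v2])⟩
  have h20 : (Gamma1 n).G.Adj v2 v0 := ⟨by simp [v2, v0, Fin.ext_iff], Or.inr (by simp [v2, v0])⟩
  refine ⟨v0, .cons h01 (.cons h12 (.cons h20 .nil)), ?_, ?_⟩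
  · simp [SimpleGraph.Walk.cons_isCycle_iff, v0, v1, v2, Fin.ext_iff]
  · simp only [SignedGraph.walkSign, SimpleGraph.Walk.edges_cons, SimpleGraph.Walk.edges_nil,
      List.map_cons, List.map_nil, List.prod_cons, List.prod_nil, SignedGraph.signEdge,
      Sym2.lift_mk]
    rw [sign_eq_one (i := v1) (j := v2) (Or.inr le_rfl),
      sign_eq_one (i := v2) (j := v0) (Or.inl le_rfl)]
    simp [Gamma1, v0, v1]

theorem negC4Free : (Gamma1 n).NegC4Free := by
  intro u c hc hlen hsign
  obtain ⟨a, b, d, hua, hab, hbd, hdu, rfl⟩ := c.exists_eq_cons_of_length_eq_four hlen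
  have hdistinct := hc.support_nodup
  simp only [SimpleGraph.Walk.support_cons, SimpleGraph.Walk.support_nil, List.tail_cons,
    List.nodup_cons, List.mem_cons, List.not_mem_nil, or_false, List.nodup_nil, and_true,
    Fin.ext_iff] at hdistinct
  have := val_le_two_of_adj hua; have := val_le_two_of_adj hua.symm
  have := val_le_two_of_adj hab; have := val_le_two_of_adj hab.symm
  have := val_le_two_of_adj hbd; have := val_le_two_of_adj hbd.symm
  have := val_le_two_of_adj hdu; have := val_le_two_of_adj hdu.symm
  -- the negative edge joins `0` and `1`, whose only other neighbour is `2`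
  have hpos : (2 ≤ u.val ∨ 2 ≤ a.val) ∧ (2 ≤ a.val ∨ 2 ≤ b.val) ∧ (2 ≤ b.val ∨ 2 ≤ d.val) ∧
      (2 ≤ d.val ∨ 2 ≤ u.val) := by omega
  obtain ⟨h1, h2, h3, h4⟩ := hpos
  simp [SignedGraph.walkSign, SignedGraph.signEdge, sign_eq_one h1, sign_eq_one h2,
    sign_eq_one h3, sign_eq_one h4] at hsign

theorem sub_three_le_lambda1 (hn : 3 ≤ n) : (n : ℝ) - 3 ≤ (Gamma1 n).lambda1 := by
  let S : Finset (Fin n) := Finset.Ici ⟨2, by omega⟩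
  have hS : (#S : ℝ) = n - 2 := by
    rw [Fin.card_Ici, Nat.cast_sub (by omega)]; rfl
  have hpos : (Gamma1 n).IsPosClique S := fun i hi j hj hij =>
    ⟨⟨hij, Or.inl (by simp [S, Fin.le_def] at hi hj; omega)⟩,
      sign_eq_one (by simp [S, Fin.le_def] at hi; omega)⟩
  have := hpos.card_sub_one_le_lambda1 ⟨⟨2, by omega⟩, by simp [S]⟩
  linarith

end Gamma1

theorem extremal_contains_C4_general (n : ℕ) (hn : 6 ≤ n) (Γ' : SignedGraph n)
    (hmax : ∀ Γ : SignedGraph n, Γ.Unbalanced → Γ.NegC4Free → Γ.lambda1 ≤ Γ'.lambda1) :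
    ∃ (u : Fin n) (c : Γ'.G.Walk u u), c.IsCycle ∧ c.length = 4 := by
  classical
  by_contra hC4
  have : NeZero n := ⟨by omega⟩
  set μ := sSup (spectrum ℝ (Γ'.G.adjMatrix ℝ))
  have hlow : (n : ℝ) - 3 ≤ μ :=
    (Gamma1.sub_three_le_lambda1 (by omega)).trans <|
      (hmax _ (Gamma1.unbalanced (by omega)) Gamma1.negC4Free).trans
        Γ'.lambda1_le_sSup_spectrum_adjMatrix
  have hup : μ ^ 2 ≤ μ + (n - 1) := by
    simpa using SimpleGraph.sq_sSup_spectrum_adjMatrix_le fun u v huv =>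
      SimpleGraph.commonNeighbors_subsingleton_of_not_exists_isCycle_length_eq_four hC4 huv
  have hn' : (6 : ℝ) ≤ n := by exact_mod_cast hn
  nlinarith

theorem extremal_contains_C4 (n : ℕ) (hn : 6 ≤ n) (Γ' : SignedGraph n)
    (hub : Γ'.Unbalanced) (hfree : Γ'.NegC4Free)
    (hmax : ∀ Γ : SignedGraph n, Γ.Unbalanced → Γ.NegC4Free → Γ.lambda1 ≤ Γ'.lambda1) :
    ∃ (u : Fin n) (c : Γ'.G.Walk u u), c.IsCycle ∧ c.length = 4 :=
  extremal_contains_C4_general n hn Γ' hmax
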